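/- arXiv:1005.4492 — 2 statements merged into one kernel-verified Lean document; each statement's English description precedes it below -/
import Mathlib

section
/- Suppose there exist a resolvable 2-(v,k,1) design D and an affine plane of order k. Then there exists a resolvable 2-(kv,k,1) design D* whose 1-block intersection graph is silver; moreover D* contains a parallel class P = {{1,...,k} × {x} : x a point of D} which is a maximum independent set of the 1-block intersection graph with respect to which a silver coloring exists. -/
open Finset

variable {α : Type*}

/-- A Steiner 2-design `S(2,k,v)`: the point set has `v` points, every block has
`k` points, and every pair of distinct points lies in exactly one block. -/
def IsSteiner [Fintype α] [DecidableEq α] (v k : ℕ) (B : Finset (Finset α)) : Prop :=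
  Fintype.card α = v ∧ (∀ b ∈ B, b.card = k) ∧
    ∀ x y : α, x ≠ y → (B.filter fun b => x ∈ b ∧ y ∈ b).card = 1

/-- The `i`-block intersection graph: vertices are the blocks of `B`, two blocks
adjacent iff they intersect in exactly `i` points. -/
def BIG [DecidableEq α] (i : ℕ) (B : Finset (Finset α)) :
    SimpleGraph {b : Finset α // b ∈ B} where
  Adj b₁ b₂ := b₁ ≠ b₂ ∧ ((b₁ : Finset α) ∩ (b₂ : Finset α)).card = i
  symm := ⟨fun a b ⟨h1, h2⟩ => ⟨h1.symm, by rwa [Finset.inter_comm]⟩⟩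
  loopless := ⟨fun a ⟨h, _⟩ => h rfl⟩

instance [DecidableEq α] (i : ℕ) (B : Finset (Finset α)) :
    DecidableRel (BIG (α := α) i B).Adj := fun _ _ => by unfold BIG; exact instDecidableAnd

/-- `I` is a maximum independent set of `G`. -/
def IsMaxIndep {V : Type*} (G : SimpleGraph V) (I : Finset V) : Prop :=
  (∀ a ∈ I, ∀ b ∈ I, ¬ G.Adj a b) ∧
    ∀ J : Finset V, (∀ a ∈ J, ∀ b ∈ J, ¬ G.Adj a b) → J.card ≤ I.card

/-- A silver coloring of the `r`-regular graph `G` with respect to `I`: a proper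
`(r+1)`-coloring under which every vertex of `I` is rainbow (all `r+1` colors
appear on its closed neighborhood). -/
def SilverWith {V : Type*} (G : SimpleGraph V) (r : ℕ) (I : Finset V) : Prop :=
  ∃ c : V → Fin (r + 1), (∀ a b, G.Adj a b → c a ≠ c b) ∧
    ∀ x ∈ I, ∀ col : Fin (r + 1), ∃ y, (y = x ∨ G.Adj x y) ∧ c y = col

/-- `G` is silver: some silver coloring exists with respect to some maximum
independent set. -/
def IsSilver {V : Type*} (G : SimpleGraph V) (r : ℕ) : Prop :=
  ∃ I : Finset V, IsMaxIndep G I ∧ SilverWith G r I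

/-- A parallel class: pairwise disjoint blocks of `B` covering every point. -/
def IsParallelClass [DecidableEq α] (B P : Finset (Finset α)) : Prop :=
  P ⊆ B ∧ (∀ b₁ ∈ P, ∀ b₂ ∈ P, b₁ ≠ b₂ → b₁ ∩ b₂ = ∅) ∧ ∀ x : α, ∃ b ∈ P, x ∈ b

/-- A resolvable design: the blocks partition into parallel classes. -/
def IsResolvable [DecidableEq α] (B : Finset (Finset α)) : Prop :=
  ∃ cs : Finset (Finset (Finset α)),
    (∀ P ∈ cs, IsParallelClass B P) ∧ ∀ b ∈ B, ∃! P, P ∈ cs ∧ b ∈ P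

/-!
Fix a parallel class `P₀` of the affine plane. The remaining lines form a resolvable transversal
design whose groups are the lines of `P₀`. For every block `b` of `D`, place a copy of it on
`Fin k × b`, sending the groups to the vertical blocks `Fin k × {x}`, `x ∈ b`; together with all
vertical blocks this is an `S(2,k,kv)`. It is resolved by the vertical class and the classes
`(Q, R)` with `Q` a class of `D` and `R` a class of the plane other than `P₀`.

Independent sets of the 1-block intersection graph of a Steiner system consist of disjoint
blocks, so any parallel class, in particular the vertical one, is a maximum independent set.
Colour every vertical block with one colour and the copy of a line `ℓ` over `b` with
(class of `b`, `ℓ`): this uses `(v-1)/(k-1) · k² + 1 = r + 1` colours, blocks of equal colour are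
disjoint, and the vertical block over `x` meets the copy of `ℓ` over the block of `Q` through `x`
in exactly one point.
-/

namespace IsSteiner

variable [Fintype α] [DecidableEq α] {v k : ℕ} {B : Finset (Finset α)}

theorem existsUnique_mem (h : IsSteiner v k B) {x y : α} (hxy : x ≠ y) :
    ∃! b, b ∈ B ∧ x ∈ b ∧ y ∈ b := by
  simpa only [card_eq_one_iff_existsUnique, mem_filter] using h.2.2 x y hxy

theorem eq_of_mem (h : IsSteiner v k B) {x y : α} (hxy : x ≠ y) {b c : Finset α}
    (hb : b ∈ B) (hc : c ∈ B) (hxb : x ∈ b) (hyb : y ∈ b) (hxc : x ∈ c) (hyc : y ∈ c) :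
    b = c :=
  (h.existsUnique_mem hxy).unique ⟨hb, hxb, hyb⟩ ⟨hc, hxc, hyc⟩

theorem card_inter_le_one (h : IsSteiner v k B) {b c : Finset α} (hb : b ∈ B) (hc : c ∈ B)
    (hbc : b ≠ c) : #(b ∩ c) ≤ 1 := by
  refine card_le_one.2 fun x hx y hy => ?_
  by_contra hxy
  rw [mem_inter] at hx hy
  exact hbc (h.eq_of_mem hxy hb hc hx.1 hy.1 hx.2 hy.2)

theorem card_filter_mem_mul (h : IsSteiner v k B) (x : α) :
    #{b ∈ B | x ∈ b} * (k - 1) = v - 1 := by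
  have hpairs : ∀ y ∈ univ.erase x, #{b ∈ {b ∈ B | x ∈ b} | y ∈ b} = 1 := fun y hy => by
    rw [filter_filter]
    exact h.2.2 x y (ne_of_mem_erase hy).symm
  have hsum := sum_card_inter hpairs
  rwa [sum_const_nat (m := k - 1) fun b hb => ?_, card_erase_of_mem (mem_univ x), card_univ,
    h.1, mul_one] at hsum
  rw [mem_filter] at hb
  rw [erase_inter, univ_inter, card_erase_of_mem hb.2, h.2.1 b hb.1]

theorem card_mul (h : IsSteiner v k B) : #B * (k * (k - 1)) = v * (v - 1) := by
  have hinc : ∑ b ∈ B, #b = ∑ x, #{b ∈ B | x ∈ b} := by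
    simpa [bipartiteAbove, bipartiteBelow] using
      (sum_card_bipartiteAbove_eq_sum_card_bipartiteBelow (s := B) (t := univ)
        (r := fun b x => x ∈ b))
  calc #B * (k * (k - 1)) = (∑ b ∈ B, #b) * (k - 1) := by
        rw [sum_const_nat fun b hb => h.2.1 b hb, mul_assoc]
    _ = ∑ x : α, #{b ∈ B | x ∈ b} * (k - 1) := by rw [hinc, sum_mul]
    _ = v * (v - 1) := by
        rw [sum_const_nat fun x _ => h.card_filter_mem_mul x, card_univ, h.1]

theorem card_eq_sq_add_self {A : Finset (Finset α)} (hA : IsSteiner (k ^ 2) k A)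
    (hk : 1 < k) : #A = k ^ 2 + k := by
  refine Nat.eq_of_mul_eq_mul_right (m := k * (k - 1)) (Nat.mul_pos (by omega) (by omega))
    (hA.card_mul.trans ?_)
  zify [show 1 ≤ k by omega, show 1 ≤ k ^ 2 by nlinarith]
  ring

end IsSteiner

/-- A resolution of `B` given as a labelling of its blocks: the classes are the fibres of `κ`. -/
def IsResolution {ι : Type*} (B : Finset (Finset α)) (κ : Finset α → ι) : Prop :=
  (∀ b ∈ B, ∀ c ∈ B, κ b = κ c → b ≠ c → Disjoint b c) ∧
    ∀ b ∈ B, ∀ x, ∃ c ∈ B, κ c = κ b ∧ x ∈ c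

theorem IsResolution.filter_ne {ι : Type*} [DecidableEq ι] {B : Finset (Finset α)}
    {κ : Finset α → ι} (h : IsResolution B κ) (i : ι) : IsResolution {b ∈ B | κ b ≠ i} κ := by
  refine ⟨fun b hb c hc => h.1 b (mem_filter.1 hb).1 c (mem_filter.1 hc).1, fun b hb x => ?_⟩
  rw [mem_filter] at hb
  obtain ⟨c, hc, hcb, hxc⟩ := h.2 b hb.1 x
  exact ⟨c, mem_filter.2 ⟨hc, hcb ▸ hb.2⟩, hcb, hxc⟩

section Classes

variable [DecidableEq α] {k : ℕ} {B P : Finset (Finset α)}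

theorem card_mul_le_of_pairwise_disjoint [Fintype α] {J : Finset (Finset α)}
    (hk : ∀ b ∈ J, #b = k) (hJ : ∀ b ∈ J, ∀ c ∈ J, b ≠ c → Disjoint b c) :
    #J * k ≤ Fintype.card α := by
  have hle : ∀ x : α, #{b ∈ J | x ∈ b} ≤ 1 := fun x => card_le_one.2 fun b hb c hc => by
    rw [mem_filter] at hb hc
    by_contra hbc
    exact disjoint_left.1 (hJ b hb.1 c hc.1 hbc) hb.2 hc.2
  simpa [sum_const_nat fun b hb => hk b hb] using sum_card_le hle

namespace IsParallelClass

theorem eq_of_mem (hP : IsParallelClass B P) {b c : Finset α} (hb : b ∈ P) (hc : c ∈ P) {x : α}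
    (hxb : x ∈ b) (hxc : x ∈ c) : b = c := by
  by_contra hbc
  simpa [hP.2.1 b hb c hc hbc] using mem_inter.2 ⟨hxb, hxc⟩

theorem card_mul [Fintype α] (hP : IsParallelClass B P) (hk : ∀ b ∈ B, #b = k) :
    #P * k = Fintype.card α := by
  have hone : ∀ x : α, #{b ∈ P | x ∈ b} = 1 := fun x => by
    obtain ⟨b, hb, hxb⟩ := hP.2.2 x
    refine card_eq_one.2 ⟨b, eq_singleton_iff_unique_mem.2 ⟨mem_filter.2 ⟨hb, hxb⟩, ?_⟩⟩
    intro c hc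
    rw [mem_filter] at hc
    exact hP.eq_of_mem hc.1 hb hc.2 hxb
  simpa [sum_const_nat fun b hb => hk b (hP.1 hb)] using sum_card hone

end IsParallelClass

theorem IsResolvable.exists_isResolution (h : IsResolvable B) :
    ∃ κ : Finset α → Finset (Finset α), IsResolution B κ := by
  obtain ⟨cs, hcs, huniq⟩ := h
  choose! κ hκ hκ_eq using huniq
  refine ⟨κ, fun b hb c hc hbc hne => ?_, fun b hb x => ?_⟩
  · have hcP : c ∈ κ b := hbc ▸ (hκ c hc).2
    rw [disjoint_iff_inter_eq_empty]
    exact (hcs _ (hκ b hb).1).2.1 b (hκ b hb).2 c hcP hne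
  · obtain ⟨c, hc, hxc⟩ := (hcs _ (hκ b hb).1).2.2 x
    have hcB := (hcs _ (hκ b hb).1).1 hc
    exact ⟨c, hcB, (hκ_eq c hcB _ ⟨(hκ b hb).1, hc⟩).symm, hxc⟩

namespace IsResolution

variable {ι : Type*} [DecidableEq ι] {κ : Finset α → ι}

theorem isParallelClass_filter (h : IsResolution B κ) {b : Finset α} (hb : b ∈ B) :
    IsParallelClass B {c ∈ B | κ c = κ b} := by
  refine ⟨filter_subset _ _, fun c₁ h₁ c₂ h₂ hne => ?_, fun x => ?_⟩
  · rw [mem_filter] at h₁ h₂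
    exact disjoint_iff_inter_eq_empty.1 (h.1 c₁ h₁.1 c₂ h₂.1 (h₁.2.trans h₂.2.symm) hne)
  · obtain ⟨c, hc, hcb, hxc⟩ := h.2 b hb x
    exact ⟨c, mem_filter.2 ⟨hc, hcb⟩, hxc⟩

theorem card_image_mul [Fintype α] {v : ℕ} (h : IsResolution B κ) (hB : IsSteiner v k B)
    (x : α) : #(B.image κ) * (k - 1) = v - 1 := by
  have himage : {b ∈ B | x ∈ b}.image κ = B.image κ := by
    refine (image_subset_image (filter_subset _ _)).antisymm fun i hi => ?_
    obtain ⟨b, hb, rfl⟩ := mem_image.1 hi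
    obtain ⟨c, hc, hcb, hxc⟩ := h.2 b hb x
    exact mem_image.2 ⟨c, mem_filter.2 ⟨hc, hxc⟩, hcb⟩
  have hinj : Set.InjOn κ ({b ∈ B | x ∈ b} : Finset _) := fun b hb c hc hbc => by
    rw [mem_coe, mem_filter] at hb hc
    by_contra hne
    exact disjoint_left.1 (h.1 b hb.1 c hc.1 hbc hne) hb.2 hc.2
  rw [← himage, card_image_of_injOn hinj, hB.card_filter_mem_mul]

end IsResolution

end Classes

theorem exists_equiv_prod_fin_of_card_fiber {β C : Type*} [Fintype β] [DecidableEq C]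
    (g : β → C) {k : ℕ} (hg : ∀ c, Fintype.card {p // g p = c} = k) :
    ∃ e : β ≃ C × Fin k, ∀ p, (e p).1 = g p :=
  ⟨(Equiv.sigmaFiberEquiv g).symm.trans
    ((Equiv.sigmaCongrRight fun c => Fintype.equivFinOfCardEq (hg c)).trans
      (Equiv.sigmaEquivProd C (Fin k))), fun _ => rfl⟩

theorem IsParallelClass.exists_equiv_prod [Fintype α] [DecidableEq α] {B P : Finset (Finset α)}
    {k : ℕ} (hP : IsParallelClass B P) (hk : ∀ b ∈ B, #b = k) :
    ∃ e : α ≃ {c // c ∈ P} × Fin k, ∀ p, p ∈ ((e p).1 : Finset α) := by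
  choose g hgP hg using hP.2.2
  have hfiber : ∀ c : {c // c ∈ P}, Fintype.card {p // (⟨g p, hgP p⟩ : {c // c ∈ P}) = c} = k := by
    rintro ⟨c, hc⟩
    rw [← hk c (hP.1 hc), Fintype.card_subtype]
    congr 1
    ext p
    simp only [mem_filter_univ, Subtype.mk.injEq]
    exact ⟨fun h => h ▸ hg p, fun h => hP.eq_of_mem (hgP p) hc (hg p) h⟩
  obtain ⟨e, he⟩ := exists_equiv_prod_fin_of_card_fiber _ hfiber
  exact ⟨e, fun p => (he p).symm ▸ hg p⟩

/-- A transversal design whose groups are the fibres of `g`. -/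
def IsTransversalDesign {β C : Type*} (g : β → C) (L : Finset (Finset β)) : Prop :=
  (∀ ℓ ∈ L, ∀ c, ∃! p, p ∈ ℓ ∧ g p = c) ∧ ∀ p q, g p ≠ g q → ∃! ℓ, ℓ ∈ L ∧ p ∈ ℓ ∧ q ∈ ℓ

namespace IsTransversalDesign

variable {β C : Type*} {g : β → C} {L : Finset (Finset β)}

theorem eq_of_mem (hL : IsTransversalDesign g L) {ℓ : Finset β} (hℓ : ℓ ∈ L) {p q : β}
    (hp : p ∈ ℓ) (hq : q ∈ ℓ) (hpq : g p = g q) : p = q :=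
  (hL.1 ℓ hℓ (g q)).unique ⟨hp, hpq⟩ ⟨hq, rfl⟩

theorem card_eq [Fintype C] [DecidableEq C] (hL : IsTransversalDesign g L) {ℓ : Finset β}
    (hℓ : ℓ ∈ L) : #ℓ = Fintype.card C := by
  rw [← card_image_of_injOn fun p hp q hq => hL.eq_of_mem hℓ hp hq, ← card_univ]
  congr 1
  refine eq_univ_of_forall fun c => ?_
  obtain ⟨p, ⟨hp, rfl⟩, -⟩ := hL.1 ℓ hℓ c
  exact mem_image_of_mem g hp

end IsTransversalDesign

theorem IsSteiner.isTransversalDesign_sdiff {β : Type*} [Fintype β] [DecidableEq β] {w k : ℕ}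
    {A P : Finset (Finset β)} (hA : IsSteiner w k A) (hP : IsParallelClass A P) (hPk : #P = k)
    {g : β → {c // c ∈ P}} (hg : ∀ p, p ∈ (g p : Finset β)) :
    IsTransversalDesign g (A \ P) := by
  have hg_eq : ∀ {c : Finset β} (hc : c ∈ P) {p}, p ∈ c → g p = ⟨c, hc⟩ := fun hc _ hpc =>
    Subtype.ext (hP.eq_of_mem (g _).2 hc (hg _) hpc)
  have hinj : ∀ ℓ ∈ A \ P, ∀ p ∈ ℓ, ∀ q ∈ ℓ, g p = g q → p = q := by
    intro ℓ hℓ p hp q hq hpq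
    rw [mem_sdiff] at hℓ
    by_contra hne
    have hq' : q ∈ (g p : Finset β) := hpq ▸ hg q
    exact hℓ.2 (hA.eq_of_mem hne hℓ.1 (hP.1 (g p).2) hp hq (hg p) hq' ▸ (g p).2)
  refine ⟨fun ℓ hℓ c => ?_, fun p q hpq => ?_⟩
  · have himage : ℓ.image g = univ := by
      refine eq_univ_of_card _ ?_
      rw [card_image_of_injOn fun p hp q hq => hinj ℓ hℓ p hp q hq,
        hA.2.1 ℓ (mem_sdiff.1 hℓ).1, Fintype.card_coe, hPk]
    obtain ⟨p, hp, rfl⟩ := mem_image.1 (himage ▸ mem_univ c)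
    exact ⟨p, ⟨hp, rfl⟩, fun q hq => hinj ℓ hℓ q hq.1 p hp hq.2⟩
  · have hne : p ≠ q := fun h => hpq (h ▸ rfl)
    obtain ⟨ℓ, ⟨hℓ, hpℓ, hqℓ⟩, huniq⟩ := hA.existsUnique_mem hne
    have hℓP : ℓ ∉ P := fun hℓP => hpq ((hg_eq hℓP hpℓ).trans (hg_eq hℓP hqℓ).symm)
    exact ⟨ℓ, ⟨mem_sdiff.2 ⟨hℓ, hℓP⟩, hpℓ, hqℓ⟩, fun m hm => huniq m
      ⟨(mem_sdiff.1 hm.1).1, hm.2⟩⟩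

theorem IsSteiner.exists_isTransversalDesign [Fintype α] [DecidableEq α] {k : ℕ}
    {A : Finset (Finset α)} (hA : IsSteiner (k ^ 2) k A) (hAres : IsResolvable A) (hk : 1 < k) :
    ∃ (P L : Finset (Finset α)) (e : α ≃ {c // c ∈ P} × Fin k) (κ : Finset α → Finset (Finset α)),
      #P = k ∧ #L = k ^ 2 ∧ IsTransversalDesign (fun p => (e p).1) L ∧ IsResolution L κ := by
  obtain ⟨κ, hκ⟩ := hAres.exists_isResolution
  obtain ⟨ℓ₀, hℓ₀⟩ : A.Nonempty := card_pos.1 (by rw [hA.card_eq_sq_add_self hk]; omega)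
  have hP : IsParallelClass A {ℓ ∈ A | κ ℓ = κ ℓ₀} := hκ.isParallelClass_filter hℓ₀
  have hPk : #{ℓ ∈ A | κ ℓ = κ ℓ₀} = k := Nat.eq_of_mul_eq_mul_right (show 0 < k by omega) (by
    rw [hP.card_mul hA.2.1, hA.1, sq])
  obtain ⟨e, he⟩ := hP.exists_equiv_prod hA.2.1
  refine ⟨_, _, e, κ, hPk, ?_, hA.isTransversalDesign_sdiff hP hPk he, ?_⟩
  · rw [card_sdiff_of_subset hP.1, hA.card_eq_sq_add_self hk, hPk, Nat.add_sub_cancel]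
  · rw [← filter_not]
    exact hκ.filter_ne _

theorem silverWith_of_coloring {V S : Type*} (G : SimpleGraph V) {r : ℕ}
    (I : Finset V) (c : V → S) (colors : Finset S) (hcard : #colors = r + 1)
    (hc : ∀ v, c v ∈ colors) (hproper : ∀ a b, G.Adj a b → c a ≠ c b)
    (hrainbow : ∀ x ∈ I, ∀ s ∈ colors, ∃ y, (y = x ∨ G.Adj x y) ∧ c y = s) :
    SilverWith G r I := by
  let φ := colors.equivFinOfCardEq hcard
  refine ⟨fun v => φ ⟨c v, hc v⟩, fun a b hab h => hproper a b hab ?_, fun x hx col => ?_⟩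
  · simpa using φ.injective h
  · obtain ⟨y, hy, hcy⟩ := hrainbow x hx (φ.symm col) (φ.symm col).2
    refine ⟨y, hy, φ.symm.injective ?_⟩
    simp [hcy]

section ImageDesign

variable [DecidableEq α] {τ : Type*} [Fintype τ] (f : τ → Finset α)

theorem isSteiner_image [Fintype α] {v k : ℕ} (hf : Function.Injective f) (hv : Fintype.card α = v)
    (hk : ∀ t, #(f t) = k) (hpair : ∀ x y : α, x ≠ y → ∃! t, x ∈ f t ∧ y ∈ f t) :
    IsSteiner v k (univ.image f) := by
  refine ⟨hv, fun b hb => ?_, fun x y hxy => ?_⟩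
  · obtain ⟨t, -, rfl⟩ := mem_image.1 hb
    exact hk t
  · rw [filter_image, card_image_of_injective _ hf]
    exact (Fintype.existsUnique_iff_card_one _).1 (hpair x y hxy)

theorem isResolvable_image {ι : Type*} [DecidableEq ι] (hf : Function.Injective f) (κ : τ → ι)
    (hdisj : ∀ s t, κ s = κ t → s ≠ t → Disjoint (f s) (f t))
    (hcover : ∀ s x, ∃ t, κ t = κ s ∧ x ∈ f t) :
    IsResolvable (univ.image f) := by
  set cls : τ → Finset (Finset α) := fun s => ({t | κ t = κ s} : Finset τ).image f
  have hcls : ∀ s t, f t ∈ cls s ↔ κ t = κ s := fun s t => by simp [cls, hf.eq_iff]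
  refine ⟨univ.image cls, fun P hP => ?_, fun b hb => ?_⟩
  · obtain ⟨s, -, rfl⟩ := mem_image.1 hP
    refine ⟨image_subset_image (subset_univ _), ?_, fun x => ?_⟩
    · simp only [cls, mem_image, mem_filter_univ]
      rintro _ ⟨t, ht, rfl⟩ _ ⟨t', ht', rfl⟩ hne
      exact disjoint_iff_inter_eq_empty.1 (hdisj t t' (ht.trans ht'.symm) (ne_of_apply_ne f hne))
    · obtain ⟨t, ht, hxt⟩ := hcover s x
      exact ⟨f t, (hcls s t).2 ht, hxt⟩
  · obtain ⟨s, -, rfl⟩ := mem_image.1 hb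
    refine ⟨cls s, ⟨mem_image_of_mem _ (mem_univ s), (hcls s s).2 rfl⟩, ?_⟩
    rintro _ ⟨hP, hsP⟩
    obtain ⟨t, -, rfl⟩ := mem_image.1 hP
    have hst : κ s = κ t := (hcls t s).1 hsP
    simp only [cls, hst]

theorem silverWith_image {S : Type*} (hf : Function.Injective f) {r : ℕ}
    (c : τ → S) (colors : Finset S) (hcard : #colors = r + 1) (hc : ∀ t, c t ∈ colors)
    (hdisj : ∀ s t, c s = c t → s ≠ t → Disjoint (f s) (f t))
    (I : Finset {b // b ∈ univ.image f})
    (hrainbow : ∀ x ∈ I, ∀ col ∈ colors,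
      ∃ t, (f t = x.1 ∨ f t ≠ x.1 ∧ #(x.1 ∩ f t) = 1) ∧ c t = col) :
    SilverWith (BIG 1 (univ.image f)) r I := by
  choose param hparam using fun s : {b // b ∈ univ.image f} => mem_image.1 s.2
  have param_eq : ∀ t, param ⟨f t, mem_image_of_mem f (mem_univ t)⟩ = t := fun t =>
    hf (hparam _).2
  refine silverWith_of_coloring _ I (c ∘ param) colors hcard (fun s => hc _)
    (fun s s' hss' hcs => ?_) fun x hx col hcol => ?_
  · have hne : param s ≠ param s' := fun h =>
      hss'.1 (Subtype.ext ((hparam s).2.symm.trans (h ▸ (hparam s').2)))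
    have hdisj := hdisj _ _ hcs hne
    rw [(hparam s).2, (hparam s').2, disjoint_iff_inter_eq_empty] at hdisj
    simpa [hdisj] using hss'.2
  · obtain ⟨t, ht, rfl⟩ := hrainbow x hx col hcol
    refine ⟨⟨f t, mem_image_of_mem f (mem_univ t)⟩, ?_, by simp only [Function.comp_apply,
      param_eq]⟩
    rcases ht with h | ⟨hne, h1⟩
    · exact Or.inl (Subtype.ext h)
    · exact Or.inr ⟨fun h => hne (congrArg Subtype.val h).symm, h1⟩

end ImageDesign

theorem IsSteiner.isMaxIndep_of_isParallelClass [Fintype α] [DecidableEq α] {w k : ℕ}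
    {B P : Finset (Finset α)} (hB : IsSteiner w k B) (hk : 0 < k) (hP : IsParallelClass B P) :
    IsMaxIndep (BIG 1 B) (P.subtype (· ∈ B)) := by
  refine ⟨fun a ha b hb hab => ?_, fun J hJ => ?_⟩
  · rw [mem_subtype] at ha hb
    have hne : a.1 ≠ b.1 := fun h => hab.1 (Subtype.ext h)
    simpa [hP.2.1 _ ha _ hb hne] using hab.2
  · have hdisj : ∀ b ∈ J.map (Function.Embedding.subtype _),
        ∀ c ∈ J.map (Function.Embedding.subtype _), b ≠ c → Disjoint b c := by
      simp only [mem_map, Function.Embedding.coe_subtype]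
      rintro _ ⟨b, hb, rfl⟩ _ ⟨c, hc, rfl⟩ hne
      have hbc : b ≠ c := fun h => hne (h ▸ rfl)
      have hle := hB.card_inter_le_one b.2 c.2 hne
      have hne1 : #(b.1 ∩ c.1) ≠ 1 := fun h => hJ b hb c hc ⟨hbc, h⟩
      rw [disjoint_iff_inter_eq_empty, ← card_eq_zero]
      omega
    have hJk := card_mul_le_of_pairwise_disjoint (fun b hb => by
      obtain ⟨b, -, rfl⟩ := mem_map.1 hb
      exact hB.2.1 b b.2) hdisj
    rw [card_map, ← hP.card_mul hB.2.1] at hJk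
    rw [card_subtype, filter_true_of_mem fun b hb => hP.1 hb]
    exact Nat.le_of_mul_le_mul_right hJk hk

section Vertical

variable [DecidableEq α] {k : ℕ}

def vertical (k : ℕ) (x : α) : Finset (Fin k × α) :=
  univ.image fun i => (i, x)

theorem mem_vertical {x : α} {z : Fin k × α} : z ∈ vertical k x ↔ z.2 = x := by
  simp [vertical, Prod.ext_iff, eq_comm]

theorem card_vertical (x : α) : #(vertical k x) = k := by
  rw [vertical, card_image_of_injective _ fun i j h => (Prod.ext_iff.1 h).1, card_univ,
    Fintype.card_fin]

theorem disjoint_vertical {x y : α} (hxy : x ≠ y) : Disjoint (vertical k x) (vertical k y) :=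
  disjoint_left.2 fun _ hx hy => hxy ((mem_vertical.1 hx).symm.trans (mem_vertical.1 hy))

theorem image_snd_vertical (hk : 0 < k) (x : α) : (vertical k x).image Prod.snd = {x} :=
  eq_singleton_iff_unique_mem.2 ⟨mem_image.2 ⟨(⟨0, hk⟩, x), mem_vertical.2 rfl, rfl⟩,
    fun _ hy => by
      obtain ⟨z, hz, rfl⟩ := mem_image.1 hy
      exact mem_vertical.1 hz⟩

end Vertical

section Lift

variable {β C : Type*} {k : ℕ} {D : Finset (Finset α)}

def lift (e : β ≃ C × Fin k) (lab : ∀ b : {b // b ∈ D}, C ≃ {x // x ∈ b.1})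
    (b : {b // b ∈ D}) (p : β) : Fin k × α :=
  ((e p).2, lab b (e p).1)

variable {e : β ≃ C × Fin k} {lab : ∀ b : {b // b ∈ D}, C ≃ {x // x ∈ b.1}}

theorem lift_snd_mem (b : {b // b ∈ D}) (p : β) : (lift e lab b p).2 ∈ b.1 :=
  (lab b _).2

theorem lift_snd_eq_iff {b : {b // b ∈ D}} {p q : β} :
    (lift e lab b p).2 = (lift e lab b q).2 ↔ (e p).1 = (e q).1 := by
  simp [lift]

theorem lift_injective (b : {b // b ∈ D}) : Function.Injective (lift e lab b) := fun _ _ h =>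
  e.injective (Prod.ext (lift_snd_eq_iff.1 (congrArg Prod.snd h)) (congrArg Prod.fst h))

theorem exists_lift_eq {b : {b // b ∈ D}} {z : Fin k × α} (hz : z.2 ∈ b.1) :
    ∃ p, lift e lab b p = z :=
  ⟨e.symm ((lab b).symm ⟨z.2, hz⟩, z.1), by simp [lift]⟩

end Lift

section Inflation

variable [DecidableEq α] {β C : Type*} {k : ℕ} {D : Finset (Finset α)}
  {e : β ≃ C × Fin k} {lab : ∀ b : {b // b ∈ D}, C ≃ {x // x ∈ b.1}} {L : Finset (Finset β)}

theorem image_snd_image_lift (hL : IsTransversalDesign (fun p => (e p).1) L) {ℓ : Finset β}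
    (hℓ : ℓ ∈ L) (b : {b // b ∈ D}) : (ℓ.image (lift e lab b)).image Prod.snd = b.1 := by
  ext x
  simp only [image_image, mem_image, Function.comp_apply]
  refine ⟨fun ⟨p, _, hpx⟩ => hpx ▸ lift_snd_mem b p, fun hx => ?_⟩
  obtain ⟨p, ⟨hp, hpx⟩, -⟩ := hL.1 ℓ hℓ ((lab b).symm ⟨x, hx⟩)
  exact ⟨p, hp, by simp [lift, hpx]⟩

theorem snd_ne_of_mem_image_lift (hL : IsTransversalDesign (fun p => (e p).1) L)
    {ℓ : Finset β} (hℓ : ℓ ∈ L) {b : {b // b ∈ D}} {z z' : Fin k × α}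
    (hz : z ∈ ℓ.image (lift e lab b)) (hz' : z' ∈ ℓ.image (lift e lab b)) (hne : z ≠ z') :
    z.2 ≠ z'.2 := by
  obtain ⟨p, hp, rfl⟩ := mem_image.1 hz
  obtain ⟨q, hq, rfl⟩ := mem_image.1 hz'
  exact fun h => hne (congrArg _ (hL.eq_of_mem hℓ hp hq (lift_snd_eq_iff.1 h)))

theorem card_image_lift_inter_vertical (hL : IsTransversalDesign (fun p => (e p).1) L)
    {ℓ : Finset β} (hℓ : ℓ ∈ L) {b : {b // b ∈ D}} {x : α} (hx : x ∈ b.1) :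
    #(ℓ.image (lift e lab b) ∩ vertical k x) = 1 := by
  obtain ⟨p, ⟨hp, hpx⟩, huniq⟩ := hL.1 ℓ hℓ ((lab b).symm ⟨x, hx⟩)
  refine card_eq_one.2 ⟨lift e lab b p, eq_singleton_iff_unique_mem.2 ⟨?_, fun z hz => ?_⟩⟩
  · exact mem_inter.2 ⟨mem_image_of_mem _ hp, mem_vertical.2 (by simp [lift, hpx])⟩
  · rw [mem_inter, mem_vertical] at hz
    obtain ⟨q, hq, rfl⟩ := mem_image.1 hz.1
    rw [huniq q ⟨hq, Equiv.eq_symm_apply _ |>.2 (Subtype.ext hz.2)⟩]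

variable (e lab L) in
def inflationBlock : α ⊕ ({b // b ∈ D} × {ℓ // ℓ ∈ L}) → Finset (Fin k × α) :=
  Sum.elim (vertical k) fun t => t.2.1.image (lift e lab t.1)

variable (e lab L) in
def inflation [Fintype α] : Finset (Finset (Fin k × α)) :=
  univ.image (inflationBlock e lab L)

theorem inflationBlock_injective [Fintype C] (hL : IsTransversalDesign (fun p => (e p).1) L)
    (hk : 1 < k) (hC : Fintype.card C = k) : Function.Injective (inflationBlock e lab L) := by
  have hk0 : 0 < k := by omega
  have hcard : ∀ b : {b // b ∈ D}, #b.1 = k := fun b => by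
    rw [← Fintype.card_coe, ← Fintype.card_congr (lab b), hC]
  have hvert_ne : ∀ x (t : {b // b ∈ D} × {ℓ // ℓ ∈ L}),
      vertical k x ≠ t.2.1.image (lift e lab t.1) := fun x t h => by
    have := congrArg (fun s => #(s.image Prod.snd)) h
    simp only [image_snd_vertical hk0, image_snd_image_lift hL t.2.2, card_singleton,
      hcard] at this
    omega
  rintro (x | ⟨b, ℓ⟩) (y | ⟨b', ℓ'⟩) h <;> simp only [inflationBlock, Sum.elim_inl,
    Sum.elim_inr] at h
  · have := congrArg (image Prod.snd) h
    rw [image_snd_vertical hk0, image_snd_vertical hk0, singleton_inj] at this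
    rw [this]
  · exact absurd h (hvert_ne x (b', ℓ'))
  · exact absurd h.symm (hvert_ne y (b, ℓ))
  · obtain rfl : b = b' := Subtype.ext (by
      simpa only [image_snd_image_lift hL ℓ.2, image_snd_image_lift hL ℓ'.2] using
        congrArg (image Prod.snd) h)
    rw [image_injective (lift_injective b) h |> Subtype.ext]

theorem existsUnique_mem_inflationBlock_of_snd_eq (hL : IsTransversalDesign (fun p => (e p).1) L)
    {z z' : Fin k × α} (hne : z ≠ z') (h : z.2 = z'.2) :
    ∃! t, z ∈ inflationBlock e lab L t ∧ z' ∈ inflationBlock e lab L t := by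
  refine ⟨.inl z.2, ⟨mem_vertical.2 rfl, mem_vertical.2 h.symm⟩, ?_⟩
  rintro (x | ⟨b, ℓ⟩) ⟨hz, hz'⟩
  · exact congrArg _ (mem_vertical.1 hz).symm
  · exact absurd h (snd_ne_of_mem_image_lift hL ℓ.2 hz hz' hne)

theorem existsUnique_mem_inflationBlock_of_snd_ne [Fintype α] {v : ℕ} (hD : IsSteiner v k D)
    (hL : IsTransversalDesign (fun p => (e p).1) L) {z z' : Fin k × α} (h : z.2 ≠ z'.2) :
    ∃! t, z ∈ inflationBlock e lab L t ∧ z' ∈ inflationBlock e lab L t := by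
  obtain ⟨b, ⟨hb, hzb, hz'b⟩, hb_uniq⟩ := hD.existsUnique_mem h
  obtain ⟨p, rfl⟩ := exists_lift_eq (e := e) (lab := lab) (b := ⟨b, hb⟩) hzb
  obtain ⟨q, rfl⟩ := exists_lift_eq (e := e) (lab := lab) (b := ⟨b, hb⟩) hz'b
  obtain ⟨ℓ, ⟨hℓ, hpℓ, hqℓ⟩, hℓ_uniq⟩ := hL.2 p q (mt lift_snd_eq_iff.2 h)
  refine ⟨.inr (⟨b, hb⟩, ⟨ℓ, hℓ⟩), ⟨mem_image_of_mem _ hpℓ, mem_image_of_mem _ hqℓ⟩, ?_⟩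
  rintro (x | ⟨b', ℓ'⟩) ⟨hz, hz'⟩
  · exact absurd ((mem_vertical.1 hz).trans (mem_vertical.1 hz').symm) h
  · obtain ⟨p', hp', hpp'⟩ := mem_image.1 hz
    obtain ⟨q', hq', hqq'⟩ := mem_image.1 hz'
    obtain rfl : b' = ⟨b, hb⟩ := Subtype.ext <| hb_uniq b'
      ⟨b'.2, hpp' ▸ lift_snd_mem b' p', hqq' ▸ lift_snd_mem b' q'⟩
    rw [lift_injective _ hpp'] at hp'
    rw [lift_injective _ hqq'] at hq'
    obtain rfl : ℓ' = ⟨ℓ, hℓ⟩ := Subtype.ext (hℓ_uniq ℓ' ⟨ℓ'.2, hp', hq'⟩)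
    rfl

theorem isSteiner_inflation [Fintype α] [Fintype C] [DecidableEq C] {v : ℕ}
    (hD : IsSteiner v k D) (hL : IsTransversalDesign (fun p => (e p).1) L) (hk : 1 < k)
    (hC : Fintype.card C = k) : IsSteiner (k * v) k (inflation e lab L) := by
  refine isSteiner_image _ (inflationBlock_injective hL hk hC) (by simp [hD.1])
    (fun t => ?_) fun z z' hne => ?_
  · rcases t with x | ⟨b, ℓ⟩
    · exact card_vertical x
    · rw [inflationBlock, Sum.elim_inr, card_image_of_injective _ (lift_injective b),
        hL.card_eq ℓ.2, hC]
  · by_cases h : z.2 = z'.2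
    · exact existsUnique_mem_inflationBlock_of_snd_eq hL hne h
    · exact existsUnique_mem_inflationBlock_of_snd_ne hD hL h

theorem isParallelClass_vertical [Fintype α] :
    IsParallelClass (inflation e lab L) (univ.image (vertical k)) := by
  refine ⟨fun s hs => ?_, fun s hs s' hs' hne => ?_, fun z => ?_⟩
  · obtain ⟨x, -, rfl⟩ := mem_image.1 hs
    exact mem_image_of_mem (inflationBlock e lab L) (mem_univ (.inl x))
  · obtain ⟨x, -, rfl⟩ := mem_image.1 hs
    obtain ⟨y, -, rfl⟩ := mem_image.1 hs'
    exact disjoint_iff_inter_eq_empty.1 (disjoint_vertical fun h => hne (h ▸ rfl))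
  · exact ⟨vertical k z.2, mem_image_of_mem _ (mem_univ _), mem_vertical.2 rfl⟩

variable (L) in
def inflationLabel {ι ι' : Type*} (κD : Finset α → ι) (κL : Finset β → ι') :
    α ⊕ ({b // b ∈ D} × {ℓ // ℓ ∈ L}) → Option (ι × ι') :=
  Sum.elim (fun _ => none) fun t => some (κD t.1.1, κL t.2.1)

theorem disjoint_inflationBlock {ι ι' : Type*} {κD : Finset α → ι} {κL : Finset β → ι'}
    (hκD : ∀ b ∈ D, ∀ c ∈ D, κD b = κD c → b ≠ c → Disjoint b c)
    (hκL : ∀ ℓ ∈ L, ∀ m ∈ L, κL ℓ = κL m → ℓ ≠ m → Disjoint ℓ m)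
    {s t : α ⊕ ({b // b ∈ D} × {ℓ // ℓ ∈ L})}
    (hst : inflationLabel L κD κL s = inflationLabel L κD κL t) (hne : s ≠ t) :
    Disjoint (inflationBlock e lab L s) (inflationBlock e lab L t) := by
  rcases s with x | ⟨b, ℓ⟩ <;> rcases t with y | ⟨b', ℓ'⟩ <;>
    simp only [inflationLabel, Sum.elim_inl, Sum.elim_inr, reduceCtorEq, Option.some.injEq,
      Prod.mk.injEq] at hst
  · exact disjoint_vertical fun h => hne (h ▸ rfl)
  · refine disjoint_left.2 fun z hz hz' => ?_
    obtain ⟨p, hp, rfl⟩ := mem_image.1 hz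
    obtain ⟨p', hp', hpp'⟩ := mem_image.1 hz'
    obtain rfl : b = b' := by
      by_contra hbb'
      have hzb : (lift e lab b p).2 ∈ b.1 := lift_snd_mem b p
      have hzb' : (lift e lab b p).2 ∈ b'.1 := hpp' ▸ lift_snd_mem b' p'
      exact disjoint_left.1 (hκD b b.2 b' b'.2 hst.1 (Subtype.coe_ne_coe.2 hbb')) hzb hzb'
    obtain rfl := lift_injective b hpp'
    obtain rfl : ℓ = ℓ' := by
      by_contra hℓℓ'
      exact disjoint_left.1 (hκL ℓ ℓ.2 ℓ' ℓ'.2 hst.2 (Subtype.coe_ne_coe.2 hℓℓ')) hp hp'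
    exact hne rfl

theorem isResolvable_inflation [Fintype α] [Fintype C] {ι ι' : Type*} [DecidableEq ι]
    [DecidableEq ι'] {κD : Finset α → ι} {κL : Finset β → ι'} (hκD : IsResolution D κD)
    (hκL : IsResolution L κL) (hL : IsTransversalDesign (fun p => (e p).1) L) (hk : 1 < k)
    (hC : Fintype.card C = k) : IsResolvable (inflation e lab L) := by
  refine isResolvable_image _ (inflationBlock_injective hL hk hC) (inflationLabel L κD κL)
    (fun s t => disjoint_inflationBlock hκD.1 hκL.1) fun s z => ?_
  rcases s with x | ⟨b, ℓ⟩
  · exact ⟨.inl z.2, rfl, mem_vertical.2 rfl⟩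
  · obtain ⟨b', hb', hκb', hzb'⟩ := hκD.2 b b.2 z.2
    obtain ⟨p, rfl⟩ := exists_lift_eq (e := e) (lab := lab) (b := ⟨b', hb'⟩) hzb'
    obtain ⟨ℓ', hℓ', hκℓ', hpℓ'⟩ := hκL.2 ℓ ℓ.2 p
    exact ⟨.inr (⟨b', hb'⟩, ⟨ℓ', hℓ'⟩), by simp [inflationLabel, hκb', hκℓ'],
      mem_image_of_mem _ hpℓ'⟩

theorem silverWith_inflation [Fintype α] [DecidableEq β] [Fintype C] {ι : Type*} [DecidableEq ι]
    {κD : Finset α → ι} (hκD : IsResolution D κD)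
    (hL : IsTransversalDesign (fun p => (e p).1) L) (hk : 1 < k) (hC : Fintype.card C = k) :
    SilverWith (BIG 1 (inflation e lab L)) (#(D.image κD) * #L)
      ((univ.image (vertical k)).subtype (· ∈ inflation e lab L)) := by
  have hinj := inflationBlock_injective (lab := lab) hL hk hC
  refine silverWith_image _ hinj (inflationLabel L κD id)
    (insert none ((D.image κD ×ˢ L).image some)) ?_ (fun t => ?_)
    (fun s t => disjoint_inflationBlock hκD.1 fun _ _ _ _ h hne => absurd h hne) _
    fun s hs col hcol => ?_
  · rw [card_insert_of_notMem (by simp), card_image_of_injective _ (Option.some_injective _),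
      card_product]
  · rcases t with x | ⟨b, ℓ⟩
    · exact mem_insert_self _ _
    · exact mem_insert_of_mem (mem_image_of_mem _ (mem_product.2
        ⟨mem_image_of_mem _ b.2, ℓ.2⟩))
  obtain ⟨x, -, hsx⟩ := mem_image.1 (mem_subtype.1 hs)
  rcases mem_insert.1 hcol with rfl | hcol
  · exact ⟨.inl x, Or.inl hsx, rfl⟩
  obtain ⟨⟨_, ℓ⟩, hQℓ, rfl⟩ := mem_image.1 hcol
  obtain ⟨hQ, hℓ⟩ := mem_product.1 hQℓ
  obtain ⟨b₀, hb₀, rfl⟩ := mem_image.1 hQ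
  obtain ⟨b, hb, hκb, hxb⟩ := hκD.2 b₀ hb₀ x
  refine ⟨.inr (⟨b, hb⟩, ⟨ℓ, hℓ⟩), Or.inr ⟨?_, ?_⟩, by simp [inflationLabel, hκb]⟩
  · rw [← hsx]
    exact hinj.ne Sum.inr_ne_inl
  · rw [← hsx, inter_comm]
    exact card_image_lift_inter_vertical hL hℓ hxb

end Inflation

/-- Given a resolvable `2-(v,k,1)` design `D` and an affine plane of order `k`,
there is a resolvable `2-(kv,k,1)` design `D*` on `Fin k × (points of D)` whose
1-block intersection graph is silver; moreover the parallel class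
`{{1,…,k} × {x} : x}` is a maximum independent set admitting a silver
coloring. -/
theorem stmt18 {β : Type*} [Fintype α] [DecidableEq α] [Fintype β] [DecidableEq β]
    (v k : ℕ) (hk : 2 < k) (hkv : k < v)
    (D : Finset (Finset α)) (hD : IsSteiner v k D) (hDres : IsResolvable D)
    (A : Finset (Finset β)) (hA : IsSteiner (k ^ 2) k A) (hAres : IsResolvable A) :
    ∃ Bs : Finset (Finset (Fin k × α)),
      IsSteiner (k * v) k Bs ∧ IsResolvable Bs ∧
      ∃ I : Finset {b : Finset (Fin k × α) // b ∈ Bs},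
        (∀ b : {b : Finset (Fin k × α) // b ∈ Bs},
          b ∈ I ↔ ∃ x : α, b.1 = Finset.univ.image fun i : Fin k => (i, x)) ∧
        IsMaxIndep (BIG 1 Bs) I ∧
        SilverWith (BIG 1 Bs) (k * (k * v - k) / (k - 1)) I := by
  have hk1 : 1 < k := by omega
  obtain ⟨x₀⟩ : Nonempty α := Fintype.card_pos_iff.1 (by rw [hD.1]; omega)
  obtain ⟨κD, hκD⟩ := hDres.exists_isResolution
  obtain ⟨P, L, e, κL, hPk, hLk, hL, hκL⟩ := hA.exists_isTransversalDesign hAres hk1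
  have hC : Fintype.card {c // c ∈ P} = k := by rw [Fintype.card_coe, hPk]
  let lab (b : {b // b ∈ D}) : {c // c ∈ P} ≃ {x // x ∈ b.1} :=
    Fintype.equivOfCardEq (by rw [hC, Fintype.card_coe, hD.2.1 b b.2])
  have hSteiner := isSteiner_inflation (lab := lab) hD hL hk1 hC
  have hr : k * (k * v - k) / (k - 1) = #(D.image κD) * #L := by
    rw [hLk, ← Nat.mul_sub_one, ← hκD.card_image_mul hD x₀,
      show k * (k * (#(D.image κD) * (k - 1))) = #(D.image κD) * k ^ 2 * (k - 1) by ring,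
      Nat.mul_div_cancel _ (by omega)]
  refine ⟨_, hSteiner, isResolvable_inflation hκD hκL hL hk1 hC, _, fun b => ?_,
    hSteiner.isMaxIndep_of_isParallelClass (by omega) isParallelClass_vertical,
    hr ▸ silverWith_inflation hκD hL hk1 hC⟩
  simp [vertical, eq_comm]
end

section
/- If v ≡ 3 (mod 6) and there exists a Kirkman triple system KTS(v), then there exists a Kirkman triple system K on 3v points whose 1-block intersection graph is silver, with the silver coloring taken with respect to the maximum independent set consisting of the v blocks {(1,x),(2,x),(3,x)} for x ranging over the points of the original system. -/
/-!
Take the points `Fin 3 × α`. Over every point `x` of `D` put the vertical `Fin 3 × {x}`, and for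
every block `b` of `D` view `Fin 3 × b` as the affine plane `AG(2,3)`: its three vertical lines
are verticals, and its nine other lines `{(c + s j, σ_b j)}` are new blocks. Two points in one
vertical lie only on that vertical; two points over distinct `x, y` lie only on lines of the plane
over the block through `x, y`, and there on exactly one. A parallel class `P` of `D` and a slope `s`
give the parallel class of all lines of slope `s` over the blocks of `P`; with the verticals this
resolves the new system.

Independent blocks of a Steiner triple system are disjoint, so the `v` verticals form a maximum
independent set. Colour every vertical by one colour and a line by its parallel class, slope and
intercept: `1 + 9 (v - 1) / 2` colours, each colour class a set of disjoint blocks. The vertical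
over `x` meets, for every class `P`, slope and intercept, the corresponding line over the block
of `P` through `x` in exactly one point, so it is rainbow.
-/

open Finset

variable {α : Type*}

open Function

section Steiner

variable [Fintype α] [DecidableEq α] {v k : ℕ} {B : Finset (Finset α)}

theorem IsSteiner.existsUnique_block (hB : IsSteiner v k B) {x y : α} (hxy : x ≠ y) :
    ∃! b, b ∈ B ∧ x ∈ b ∧ y ∈ b := by
  simpa only [mem_filter] using card_eq_one_iff_existsUnique.mp (hB.2.2 x y hxy)

theorem IsSteiner.disjoint_of_not_adj (hB : IsSteiner v k B) {a b : {b // b ∈ B}} (hne : a ≠ b)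
    (hab : ¬ (BIG 1 B).Adj a b) : Disjoint a.1 b.1 := by
  have hle : (a.1 ∩ b.1).card ≤ 1 := by
    refine card_le_one.mpr fun x hx y hy => by_contra fun hxy => hne (Subtype.ext ?_)
    rw [mem_inter] at hx hy
    exact (hB.existsUnique_block hxy).unique ⟨a.2, hx.1, hy.1⟩ ⟨b.2, hx.2, hy.2⟩
  have hne_one : (a.1 ∩ b.1).card ≠ 1 := fun h => hab ⟨hne, h⟩
  rw [disjoint_iff_inter_eq_empty, ← card_eq_zero]
  omega

theorem IsSteiner.mul_card_le_of_independent (hB : IsSteiner v k B) {J : Finset {b // b ∈ B}}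
    (hJ : ∀ a ∈ J, ∀ b ∈ J, ¬ (BIG 1 B).Adj a b) : k * J.card ≤ v := by
  calc k * J.card = ∑ b ∈ J, b.1.card := by rw [sum_const_nat fun b _ => hB.2.1 b.1 b.2, mul_comm]
    _ = (J.biUnion Subtype.val).card :=
      (card_biUnion fun a ha b hb hab => hB.disjoint_of_not_adj hab (hJ a ha b hb)).symm
    _ ≤ v := hB.1 ▸ card_le_univ _

theorem IsSteiner.isMaxIndep_of_pairwise_disjoint (hB : IsSteiner v k B) (hk : 0 < k)
    {I : Finset {b // b ∈ B}} (hI : ∀ a ∈ I, ∀ b ∈ I, a ≠ b → Disjoint a.1 b.1)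
    (hcard : k * I.card = v) : IsMaxIndep (BIG 1 B) I := by
  refine ⟨fun a ha b hb ⟨hne, hone⟩ => ?_, fun J hJ => ?_⟩
  · rw [disjoint_iff_inter_eq_empty.mp (hI a ha b hb hne), card_empty] at hone
    exact zero_ne_one hone
  · exact Nat.le_of_mul_le_mul_left (hcard ▸ hB.mul_card_le_of_independent hJ) hk

/-- The blocks through `x`, with `x` removed, partition the other `v - 1` points. -/
theorem IsSteiner.mul_card_filter_mem (hB : IsSteiner v k B) (x : α) :
    (k - 1) * (B.filter (x ∈ ·)).card = v - 1 := by
  set T := B.filter (x ∈ ·)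
  have hdisj : (T : Set (Finset α)).PairwiseDisjoint (·.erase x) := by
    intro b hb b' hb' hne
    simp only [coe_filter, Set.mem_ofPred_eq, T] at hb hb'
    refine disjoint_left.mpr fun y hy hy' => hne ?_
    rw [mem_erase] at hy hy'
    exact (hB.existsUnique_block hy.1.symm).unique ⟨hb.1, hb.2, hy.2⟩ ⟨hb'.1, hb'.2, hy'.2⟩
  have hcover : T.biUnion (·.erase x) = univ.erase x := by
    ext y
    simp only [mem_biUnion, mem_erase, mem_univ, and_true, mem_filter, T]
    refine ⟨fun ⟨_, _, hy⟩ => hy.1, fun hy => ?_⟩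
    obtain ⟨b, ⟨hb, hxb, hyb⟩, -⟩ := hB.existsUnique_block (Ne.symm hy)
    exact ⟨b, ⟨hb, hxb⟩, hy, hyb⟩
  calc (k - 1) * T.card = ∑ b ∈ T, (b.erase x).card := by
        rw [sum_const_nat fun b hb => ?_, mul_comm]
        rw [mem_filter] at hb
        rw [card_erase_of_mem hb.2, hB.2.1 b hb.1]
    _ = v - 1 := by
        rw [← card_biUnion hdisj, hcover, card_erase_of_mem (mem_univ x), card_univ, hB.1]

end Steiner

section Indexed

variable {ι κ β : Type*}

/-- A resolution, presented as a labelling of the blocks by their parallel class. -/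
def IsResolutionMap (block : ι → Finset β) (cls : ι → κ) : Prop :=
  (∀ i j, cls i = cls j → i ≠ j → Disjoint (block i) (block j)) ∧
    ∀ c p, ∃ i, cls i = c ∧ p ∈ block i

theorem IsResolvable.exists_isResolutionMap [DecidableEq α] {B : Finset (Finset α)}
    (h : IsResolvable B) :
    ∃ cs : Finset (Finset (Finset α)), ∃ cls : B → cs, IsResolutionMap Subtype.val cls := by
  obtain ⟨cs, hcs, huniq⟩ := h
  choose P hP using fun b hb => (huniq b hb).exists
  refine ⟨cs, fun b => ⟨P b b.2, (hP b b.2).1⟩, fun b b' hbb' hne => ?_, fun Q x => ?_⟩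
  · have hP_eq : P b' b'.2 = P b b.2 := (congrArg Subtype.val hbb').symm
    have hb' : b'.1 ∈ P b b.2 := hP_eq ▸ (hP b' b'.2).2
    exact disjoint_iff_inter_eq_empty.mpr <|
      (hcs _ (hP b b.2).1).2.1 b (hP b b.2).2 b' hb' (Subtype.val_injective.ne hne)
  · obtain ⟨b, hbQ, hxb⟩ := (hcs Q Q.2).2.2 x
    have hb : b ∈ B := (hcs Q Q.2).1 hbQ
    exact ⟨⟨b, hb⟩, Subtype.ext <| (huniq b hb).unique (hP b hb) ⟨Q.2, hbQ⟩, hxb⟩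

variable [DecidableEq β] {block : ι → Finset β} {cls : ι → κ}

/-- Each parallel class contains exactly one block through a given point. -/
theorem IsResolutionMap.card_eq_card_filter_mem [Fintype ι] [Fintype κ]
    (h : IsResolutionMap block cls) (p : β) :
    Fintype.card κ = (univ.filter fun i => p ∈ block i).card := by
  refine (card_bij (fun i _ => cls i) (fun _ _ => mem_univ _) (fun i hi j hj hij => ?_)
    fun c _ => ?_).symm
  · rw [mem_filter] at hi hj
    by_contra hne
    exact disjoint_left.mp (h.1 i j hij hne) hi.2 hj.2
  · obtain ⟨i, hi, hp⟩ := h.2 c p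
    exact ⟨i, mem_filter.mpr ⟨mem_univ i, hp⟩, hi⟩

theorem IsSteiner.mul_card_eq_of_isResolutionMap [Fintype α] [DecidableEq α] [Fintype κ] {v k : ℕ}
    {B : Finset (Finset α)} (hB : IsSteiner v k B) {cls : B → κ}
    (hcls : IsResolutionMap Subtype.val cls) (x : α) : (k - 1) * Fintype.card κ = v - 1 := by
  rw [hcls.card_eq_card_filter_mem x, ← hB.mul_card_filter_mem x, univ_eq_attach,
    filter_attach (x ∈ ·), card_map, card_attach]

theorem IsResolutionMap.isResolvable_image [Fintype ι] [Fintype κ] [DecidableEq κ]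
    (h : IsResolutionMap block cls) (hinj : Injective block) : IsResolvable (univ.image block) := by
  refine ⟨univ.image fun c => (univ.filter (cls · = c)).image block, ?_, ?_⟩
  · simp only [mem_image, mem_univ, true_and, forall_exists_index, forall_apply_eq_imp_iff]
    intro c
    refine ⟨image_subset_image (subset_univ _), ?_, fun p => ?_⟩
    · simp only [mem_image, mem_filter, mem_univ, true_and]
      rintro _ ⟨i, rfl, rfl⟩ _ ⟨j, hj, rfl⟩ hne
      exact disjoint_iff_inter_eq_empty.mp (h.1 i j hj.symm (ne_of_apply_ne block hne))
    · obtain ⟨i, hi, hp⟩ := h.2 c p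
      exact ⟨block i, mem_image_of_mem _ (mem_filter.mpr ⟨mem_univ i, hi⟩), hp⟩
  · simp only [mem_image, mem_univ, true_and, forall_exists_index, forall_apply_eq_imp_iff]
    intro i
    refine ⟨_, ⟨⟨cls i, rfl⟩, mem_image_of_mem _ (mem_filter.mpr ⟨mem_univ i, rfl⟩)⟩, ?_⟩
    rintro _ ⟨⟨c, rfl⟩, hi⟩
    obtain ⟨j, hj, hji⟩ := mem_image.mp hi
    rw [← hinj hji, (mem_filter.mp hj).2]

theorem isSteiner_image_s19 [Fintype β] [Fintype ι] {v k : ℕ}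
    (hv : Fintype.card β = v) (hk : ∀ i, (block i).card = k)
    (hpair : ∀ p q : β, p ≠ q → ∃! i, p ∈ block i ∧ q ∈ block i) :
    IsSteiner v k (univ.image block) := by
  refine ⟨hv, by simpa using hk, fun p q hpq => card_eq_one_iff_existsUnique.mpr ?_⟩
  obtain ⟨i, hi, huniq⟩ := hpair p q hpq
  refine ⟨block i, mem_filter.mpr ⟨mem_image_of_mem _ (mem_univ i), hi⟩, fun t ht => ?_⟩
  obtain ⟨htB, hpq'⟩ := mem_filter.mp ht
  obtain ⟨j, -, rfl⟩ := mem_image.mp htB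
  rw [huniq j hpq']

theorem silverWith_image_s19 [Fintype ι] (hinj : Injective block) {C : Type*} [Fintype C] {r : ℕ}
    (hC : Fintype.card C = r + 1) (col : ι → C)
    (hcol : ∀ i j, col i = col j → i ≠ j → Disjoint (block i) (block j))
    {I : Finset {t // t ∈ univ.image block}}
    (hI : ∀ t ∈ I, ∀ c, ∃ i, col i = c ∧ (block i = t.1 ∨ (t.1 ∩ block i).card = 1)) :
    SilverWith (BIG 1 (univ.image block)) r I := by
  have hidx (t : {t // t ∈ univ.image block}) : ∃ i, block i = t :=
    let ⟨i, _, hi⟩ := mem_image.mp t.2; ⟨i, hi⟩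
  choose idx hidx using hidx
  let vertex (i : ι) : {t // t ∈ univ.image block} := ⟨block i, mem_image_of_mem _ (mem_univ i)⟩
  have idx_vertex (i : ι) : idx (vertex i) = i := hinj (hidx _)
  let e := Fintype.equivFinOfCardEq hC
  refine ⟨fun t => e (col (idx t)), fun a b ⟨hne, hone⟩ hab => ?_, fun t ht c => ?_⟩
  · have hdisj := hcol _ _ (e.injective hab) fun h => hne (Subtype.ext (by rw [← hidx a, h, hidx]))
    rw [← hidx a, ← hidx b, disjoint_iff_inter_eq_empty.mp hdisj, card_empty] at hone
    exact zero_ne_one hone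
  · obtain ⟨i, hic, hi⟩ := hI t ht (e.symm c)
    refine ⟨vertex i, ?_, by simp only [idx_vertex, hic, Equiv.apply_symm_apply]⟩
    rcases eq_or_ne (block i) t.1 with h | h
    · exact Or.inl (Subtype.ext h)
    · exact Or.inr ⟨fun h' => h (congrArg Subtype.val h').symm, hi.resolve_left h⟩

end Indexed

theorem existsUnique_affine_fin_three (i₁ i₂ : Fin 3) {j₁ j₂ : Fin 3} (hj : j₁ ≠ j₂) :
    ∃! sc : Fin 3 × Fin 3, sc.2 + sc.1 * j₁ = i₁ ∧ sc.2 + sc.1 * j₂ = i₂ := by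
  rw [Fintype.existsUnique_iff_card_one]
  revert i₁ i₂ j₁ j₂
  decide

namespace Tripling

section Lines

variable [DecidableEq α]

def vertical (x : α) : Finset (Fin 3 × α) := univ.image fun i => (i, x)

def line (e : Fin 3 ↪ α) (s c : Fin 3) : Finset (Fin 3 × α) :=
  univ.image fun j => (c + s * j, e j)

variable {e : Fin 3 ↪ α} {s c : Fin 3} {x y : α} {p q : Fin 3 × α}

theorem mem_vertical : p ∈ vertical x ↔ p.2 = x := by
  simp [vertical, Prod.ext_iff, eq_comm]

theorem mem_line : p ∈ line e s c ↔ ∃ j, c + s * j = p.1 ∧ e j = p.2 := by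
  simp [line, Prod.ext_iff]

theorem card_vertical (x : α) : (vertical x).card = 3 := by
  rw [vertical, card_image_of_injective _ fun i j h => congrArg Prod.fst h, card_univ,
    Fintype.card_fin]

theorem card_line (e : Fin 3 ↪ α) (s c : Fin 3) : (line e s c).card = 3 := by
  rw [line, card_image_of_injective _ fun i j h => e.injective (congrArg Prod.snd h), card_univ,
    Fintype.card_fin]

theorem vertical_injective : Injective (vertical (α := α)) := fun x y h =>
  mem_vertical.mp (h ▸ mem_vertical.mpr rfl : ((0 : Fin 3), x) ∈ vertical y)

theorem disjoint_vertical (hxy : x ≠ y) : Disjoint (vertical x) (vertical y) :=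
  disjoint_left.mpr fun _ hx hy => hxy ((mem_vertical.mp hx).symm.trans (mem_vertical.mp hy))

theorem eq_of_mem_line_of_snd_eq (hp : p ∈ line e s c) (hq : q ∈ line e s c) (h : p.2 = q.2) :
    p = q := by
  obtain ⟨j, hj₁, hj₂⟩ := mem_line.mp hp
  obtain ⟨j', hj₁', hj₂'⟩ := mem_line.mp hq
  obtain rfl : j = j' := e.injective (hj₂.trans (h.trans hj₂'.symm))
  exact Prod.ext (hj₁.symm.trans hj₁') h

theorem vertical_ne_line : vertical x ≠ line e s c := by
  intro h
  have hmem (i : Fin 3) : (i, x) ∈ line e s c := h ▸ mem_vertical.mpr rfl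
  exact zero_ne_one (congrArg Prod.fst (eq_of_mem_line_of_snd_eq (hmem 0) (hmem 1) rfl))

theorem mem_map_of_mem_line (hp : p ∈ line e s c) : p.2 ∈ univ.map e := by
  obtain ⟨j, -, hj⟩ := mem_line.mp hp
  exact mem_map.mpr ⟨j, mem_univ j, hj⟩

theorem image_snd_line (e : Fin 3 ↪ α) (s c : Fin 3) :
    (line e s c).image Prod.snd = univ.map e := by
  rw [line, image_image, map_eq_image]
  rfl

theorem mk_mem_line_sub (e : Fin 3 ↪ α) (s i j : Fin 3) : (i, e j) ∈ line e s (i - s * j) :=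
  mem_line.mpr ⟨j, sub_add_cancel i _, rfl⟩

theorem existsUnique_line (e : Fin 3 ↪ α) (i₁ i₂ : Fin 3) {j₁ j₂ : Fin 3} (hj : j₁ ≠ j₂) :
    ∃! sc : Fin 3 × Fin 3, (i₁, e j₁) ∈ line e sc.1 sc.2 ∧ (i₂, e j₂) ∈ line e sc.1 sc.2 := by
  simpa only [mem_line, e.injective.eq_iff, exists_eq_right]
    using existsUnique_affine_fin_three i₁ i₂ hj

theorem eq_of_line_eq {s' c' : Fin 3} (h : line e s c = line e s' c') : s = s' ∧ c = c' := by
  have hmem (j : Fin 3) : (c + s * j, e j) ∈ line e s c := mem_line.mpr ⟨j, rfl, rfl⟩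
  have hmem' (j : Fin 3) : (c + s * j, e j) ∈ line e s' c' := h ▸ hmem j
  exact Prod.ext_iff.mp <| (existsUnique_line e (c + s * 0) (c + s * 1) zero_ne_one).unique
    (y₁ := (s, c)) (y₂ := (s', c')) ⟨hmem 0, hmem 1⟩ ⟨hmem' 0, hmem' 1⟩

theorem disjoint_line_of_ne {c' : Fin 3} (hc : c ≠ c') : Disjoint (line e s c) (line e s c') := by
  refine disjoint_left.mpr fun p hp hp' => hc ?_
  obtain ⟨j, hj₁, hj₂⟩ := mem_line.mp hp
  obtain ⟨j', hj₁', hj₂'⟩ := mem_line.mp hp'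
  obtain rfl : j = j' := e.injective (hj₂.trans hj₂'.symm)
  exact add_right_cancel (hj₁.trans hj₁'.symm)

theorem disjoint_line_of_disjoint {e' : Fin 3 ↪ α} (s' c' : Fin 3)
    (h : Disjoint (univ.map e) (univ.map e')) : Disjoint (line e s c) (line e' s' c') :=
  disjoint_left.mpr fun _ hp hp' =>
    disjoint_left.mp h (mem_map_of_mem_line hp) (mem_map_of_mem_line hp')

theorem vertical_inter_line (j : Fin 3) :
    vertical (e j) ∩ line e s c = {(c + s * j, e j)} := by
  have hmem : (c + s * j, e j) ∈ line e s c := mem_line.mpr ⟨j, rfl, rfl⟩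
  ext p
  simp only [mem_inter, mem_vertical, mem_singleton]
  exact ⟨fun ⟨hp, hpl⟩ => eq_of_mem_line_of_snd_eq hpl hmem hp, fun h => h ▸ ⟨rfl, hmem⟩⟩

end Lines

variable {D : Finset (Finset α)} {σ : D → Fin 3 ↪ α}

theorem exists_apply_eq_of_mem (hσ : ∀ b, univ.map (σ b) = b) {b : D} {x : α}
    (hx : x ∈ (b : Finset α)) : ∃ j, σ b j = x := by
  rw [← hσ b, mem_map] at hx
  obtain ⟨j, -, hj⟩ := hx
  exact ⟨j, hj⟩

variable {κ : Type*}

variable (cls : D → κ) in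
def tripleClass : α ⊕ D × Fin 3 × Fin 3 → Option (κ × Fin 3)
  | .inl _ => none
  | .inr (b, s, _) => some (cls b, s)

variable (cls : D → κ) in
def tripleColor : α ⊕ D × Fin 3 × Fin 3 → Option (κ × Fin 3 × Fin 3)
  | .inl _ => none
  | .inr (b, s, c) => some (cls b, s, c)

variable {cls : D → κ}

theorem tripleClass_eq_of_tripleColor_eq {i j : α ⊕ D × Fin 3 × Fin 3}
    (h : tripleColor cls i = tripleColor cls j) : tripleClass cls i = tripleClass cls j := by
  rcases i with _ | ⟨b, s, c⟩ <;> rcases j with _ | ⟨b', s', c'⟩ <;>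
    simp_all [tripleColor, tripleClass]

variable [DecidableEq α]

variable (σ) in
/-- `σ b` coordinatises the plane `Fin 3 × b`; its three vertical lines are verticals, which the
planes share, so only the nine other lines are indexed by `b`. -/
def tripleBlock : α ⊕ D × Fin 3 × Fin 3 → Finset (Fin 3 × α)
  | .inl x => vertical x
  | .inr (b, s, c) => line (σ b) s c

theorem tripleBlock_injective (hσ : ∀ b, univ.map (σ b) = b) : Injective (tripleBlock σ) := by
  rintro (x | ⟨b, s, c⟩) (y | ⟨b', s', c'⟩) h
  · exact congrArg _ (vertical_injective h)
  · exact absurd h vertical_ne_line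
  · exact absurd h.symm vertical_ne_line
  · obtain rfl : b = b' := Subtype.ext <| by
      rw [← hσ b, ← hσ b', ← image_snd_line _ s c, ← image_snd_line _ s' c']
      exact congrArg _ h
    obtain ⟨rfl, rfl⟩ := eq_of_line_eq h
    rfl

theorem card_tripleBlock (i : α ⊕ D × Fin 3 × Fin 3) : (tripleBlock σ i).card = 3 := by
  rcases i with x | ⟨b, s, c⟩
  exacts [card_vertical x, card_line (σ b) s c]

theorem existsUnique_tripleBlock {v : ℕ} [Fintype α] (hD : IsSteiner v 3 D)
    (hσ : ∀ b, univ.map (σ b) = b) {p q : Fin 3 × α} (hpq : p ≠ q) :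
    ∃! i, p ∈ tripleBlock σ i ∧ q ∈ tripleBlock σ i := by
  obtain ⟨i₁, x₁⟩ := p
  obtain ⟨i₂, x₂⟩ := q
  rcases eq_or_ne x₁ x₂ with rfl | hx
  · refine ⟨.inl x₁, ⟨mem_vertical.mpr rfl, mem_vertical.mpr rfl⟩, ?_⟩
    rintro (y | _) ⟨hp, hq⟩
    · exact congrArg _ (mem_vertical.mp hp).symm
    · exact absurd (eq_of_mem_line_of_snd_eq hp hq rfl) hpq
  · obtain ⟨b, ⟨hbD, hx₁, hx₂⟩, hb_uniq⟩ := hD.existsUnique_block hx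
    obtain ⟨j₁, rfl⟩ := exists_apply_eq_of_mem hσ (b := ⟨b, hbD⟩) hx₁
    obtain ⟨j₂, rfl⟩ := exists_apply_eq_of_mem hσ (b := ⟨b, hbD⟩) hx₂
    obtain ⟨⟨s, c⟩, hsc, hsc_uniq⟩ := existsUnique_line (σ ⟨b, hbD⟩) i₁ i₂ (ne_of_apply_ne _ hx)
    refine ⟨.inr (⟨b, hbD⟩, s, c), hsc, ?_⟩
    rintro (y | ⟨b', s', c'⟩) ⟨hp, hq⟩
    · exact absurd ((mem_vertical.mp hp).trans (mem_vertical.mp hq).symm) hx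
    · have hp' := mem_map_of_mem_line hp
      have hq' := mem_map_of_mem_line hq
      rw [hσ] at hp' hq'
      obtain rfl : b' = ⟨b, hbD⟩ := Subtype.ext (hb_uniq b' ⟨b'.2, hp', hq'⟩)
      obtain ⟨rfl, rfl⟩ := Prod.ext_iff.mp (hsc_uniq (s', c') ⟨hp, hq⟩)
      rfl

theorem disjoint_tripleBlock_of_tripleClass_eq (hσ : ∀ b, univ.map (σ b) = b)
    (hcls : IsResolutionMap Subtype.val cls) {i j : α ⊕ D × Fin 3 × Fin 3}
    (h : tripleClass cls i = tripleClass cls j) (hij : i ≠ j) :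
    Disjoint (tripleBlock σ i) (tripleBlock σ j) := by
  rcases i with x | ⟨b, s, c⟩ <;> rcases j with y | ⟨b', s', c'⟩
  · exact disjoint_vertical fun h => hij (congrArg _ h)
  · cases h
  · cases h
  · obtain ⟨hb, rfl⟩ : cls b = cls b' ∧ s = s' := by simpa [tripleClass] using h
    by_cases hbb : b = b'
    · subst hbb
      exact disjoint_line_of_ne fun hc => hij (hc ▸ rfl)
    · exact disjoint_line_of_disjoint s c' (by rw [hσ, hσ]; exact hcls.1 b b' hb hbb)

theorem isResolutionMap_tripleClass (hσ : ∀ b, univ.map (σ b) = b)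
    (hcls : IsResolutionMap Subtype.val cls) :
    IsResolutionMap (tripleBlock σ) (tripleClass cls) := by
  refine ⟨fun i j => disjoint_tripleBlock_of_tripleClass_eq hσ hcls, ?_⟩
  rintro (_ | ⟨k, s⟩) ⟨i, x⟩
  · exact ⟨.inl x, rfl, mem_vertical.mpr rfl⟩
  · obtain ⟨b, rfl, hxb⟩ := hcls.2 k x
    obtain ⟨j, rfl⟩ := exists_apply_eq_of_mem hσ hxb
    exact ⟨.inr (b, s, i - s * j), rfl, mk_mem_line_sub _ s i j⟩

theorem exists_tripleColor_eq (hσ : ∀ b, univ.map (σ b) = b)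
    (hcls : IsResolutionMap Subtype.val cls) (x : α) (col : Option (κ × Fin 3 × Fin 3)) :
    ∃ i, tripleColor cls i = col ∧
      (tripleBlock σ i = vertical x ∨ (vertical x ∩ tripleBlock σ i).card = 1) := by
  rcases col with _ | ⟨k, s, c⟩
  · exact ⟨.inl x, rfl, Or.inl rfl⟩
  · obtain ⟨b, rfl, hxb⟩ := hcls.2 k x
    obtain ⟨j, rfl⟩ := exists_apply_eq_of_mem hσ hxb
    refine ⟨.inr (b, s, c), rfl, Or.inr ?_⟩
    rw [tripleBlock, vertical_inter_line, card_singleton]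

variable [Fintype α] (σ) in
def verticals : Finset {t // t ∈ univ.image (tripleBlock σ)} :=
  univ.image fun x => ⟨vertical x, mem_image_of_mem (tripleBlock σ) (mem_univ (Sum.inl x))⟩

theorem mem_verticals [Fintype α] {t : {t // t ∈ univ.image (tripleBlock σ)}} :
    t ∈ verticals σ ↔ ∃ x, t.1 = vertical x := by
  simp only [verticals, mem_image, mem_univ, true_and, Subtype.ext_iff, eq_comm]

theorem isMaxIndep_verticals [Fintype α] {v : ℕ}
    (hB : IsSteiner (3 * v) 3 (univ.image (tripleBlock σ))) :
    IsMaxIndep (BIG 1 (univ.image (tripleBlock σ))) (verticals σ) := by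
  refine hB.isMaxIndep_of_pairwise_disjoint three_pos (fun a ha b hb hab => ?_) ?_
  · obtain ⟨x, hx⟩ := mem_verticals.mp ha
    obtain ⟨y, hy⟩ := mem_verticals.mp hb
    rw [hx, hy]
    exact disjoint_vertical fun hxy => hab (Subtype.ext (by rw [hx, hy, hxy]))
  · have hcard := hB.1
    rw [Fintype.card_prod, Fintype.card_fin] at hcard
    rw [verticals, card_image_of_injective _ fun x y h =>
      vertical_injective (congrArg Subtype.val h), card_univ]
    omega

theorem silverWith_verticals [Fintype α] [Fintype κ] (hσ : ∀ b, univ.map (σ b) = b)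
    (hcls : IsResolutionMap Subtype.val cls) {r : ℕ} (hr : 9 * Fintype.card κ = r) :
    SilverWith (BIG 1 (univ.image (tripleBlock σ))) r (verticals σ) := by
  refine silverWith_image_s19 (tripleBlock_injective hσ) (C := Option (κ × Fin 3 × Fin 3)) ?_
    (tripleColor cls) (fun i j h => disjoint_tripleBlock_of_tripleClass_eq hσ hcls
      (tripleClass_eq_of_tripleColor_eq h)) fun t ht c => ?_
  · rw [Fintype.card_option, Fintype.card_prod, Fintype.card_prod, Fintype.card_fin, ← hr]
    ring
  · obtain ⟨x, hx⟩ := mem_verticals.mp ht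
    rw [hx]
    exact exists_tripleColor_eq hσ hcls x c

end Tripling

open Tripling in
/-- If `v ≡ 3 (mod 6)` and a Kirkman triple system on `v` points exists, then
there is a Kirkman triple system on `3v` points whose 1-block intersection
graph is silver, with the silver coloring taken with respect to the maximum
independent set of blocks `{(1,x),(2,x),(3,x)}`, `x` a point of the original
system. -/
theorem stmt19 [Fintype α] [DecidableEq α] (v : ℕ) (hv : v % 6 = 3)
    (D : Finset (Finset α)) (hD : IsSteiner v 3 D) (hDres : IsResolvable D) :
    ∃ Bs : Finset (Finset (Fin 3 × α)),
      IsSteiner (3 * v) 3 Bs ∧ IsResolvable Bs ∧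
      ∃ I : Finset {b : Finset (Fin 3 × α) // b ∈ Bs},
        (∀ b : {b : Finset (Fin 3 × α) // b ∈ Bs},
          b ∈ I ↔ ∃ x : α, b.1 = Finset.univ.image fun i : Fin 3 => (i, x)) ∧
        IsMaxIndep (BIG 1 Bs) I ∧
        SilverWith (BIG 1 Bs) (3 * (3 * v - 3) / 2) I := by
  choose σ hσ using fun b : D => Function.Embedding.exists_of_card_eq_finset
    (by rw [Fintype.card_fin, hD.2.1 b b.2] : Fintype.card (Fin 3) = (b : Finset α).card)
  obtain ⟨cs, cls, hcls⟩ := hDres.exists_isResolutionMap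
  obtain ⟨x₀⟩ : Nonempty α := by rw [← Fintype.card_pos_iff, hD.1]; omega
  have hr := hD.mul_card_eq_of_isResolutionMap hcls x₀
  have hSteiner : IsSteiner (3 * v) 3 (univ.image (tripleBlock σ)) :=
    isSteiner_image_s19 (by simp [hD.1]) card_tripleBlock fun _ _ => existsUnique_tripleBlock hD hσ
  exact ⟨_, hSteiner,
    (isResolutionMap_tripleClass hσ hcls).isResolvable_image (tripleBlock_injective hσ),
    verticals σ, fun _ => mem_verticals, isMaxIndep_verticals hSteiner,
    silverWith_verticals hσ hcls (by omega)⟩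
end
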